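/- Let f, g, h be trajectories such that every pair among them overlaps and such that a_h ≤ a_f ≤ a_g and b_f ≤ b_g ≤ b_h. Then d_c(f,g) ≤ d_c(f,h) + d_c(h,g). -/

import Mathlib

open MeasureTheory Set

/-- The ℓ_p norm on ℝ^r. -/
noncomputable def lpNorm (r : ℕ) (p : ℝ) (x : Fin r → ℝ) : ℝ :=
  (∑ i, |x i| ^ p) ^ (1 / p)

/-- The ℓ_p distance between two trajectory segments aligned on [t₁, t₂]. -/
noncomputable def segDist (r : ℕ) (p : ℝ) (t₁ t₂ : ℝ) (f g : ℝ → Fin r → ℝ) : ℝ :=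
  ∫ t in t₁..t₂, lpNorm r p (fun i => f t i - g t i)

/-- A trajectory: a function ℝ → ℝ^r together with an interval [a, b] (a ≤ b)
on which it is continuous. -/
structure Traj (r : ℕ) where
  f : ℝ → Fin r → ℝ
  a : ℝ
  b : ℝ
  hab : a ≤ b
  cont : ContinuousOn f (Set.Icc a b)

/-- Two trajectories overlap if their time domains intersect. -/
def Overlap {r : ℕ} (F G : Traj r) : Prop := max F.a G.a ≤ min F.b G.b

/-- The pairwise spatio-temporal trajectory distance with segment cutoff
coefficient cS (equal FA and MD cutoffs). -/
noncomputable def dC (r : ℕ) (p cS : ℝ) (F G : Traj r) : ℝ :=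
  ((r : ℝ) * (cS * (|F.a - G.a| + |F.b - G.b|)) ^ p +
    min ((segDist r p (max F.a G.a) (min F.b G.b) F.f G.f) ^ p)
        ((r : ℝ) * (2 * cS * (min F.b G.b - max F.a G.a)) ^ p)) ^ (1 / p)

lemma lpNorm_nonneg (r : ℕ) (p : ℝ) (x : Fin r → ℝ) : 0 ≤ lpNorm r p x :=
  Real.rpow_nonneg (Finset.sum_nonneg fun i _ => Real.rpow_nonneg (abs_nonneg _) _) _

lemma lpNorm_triangle (r : ℕ) {p : ℝ} (hp : 1 ≤ p) (u v w : Fin r → ℝ) :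
    lpNorm r p (fun i => u i - w i) ≤
      lpNorm r p (fun i => u i - v i) + lpNorm r p (fun i => v i - w i) := by
  have := Real.Lp_add_le (Finset.univ : Finset (Fin r))
      (fun i => u i - v i) (fun i => v i - w i) hp
  simpa [_root_.lpNorm, sub_add_sub_cancel] using this

lemma lpNorm_continuous (r : ℕ) {p : ℝ} (hp : 1 ≤ p) :
    Continuous fun x : Fin r → ℝ => lpNorm r p x := by
  have hp0 : (0:ℝ) ≤ p := le_trans zero_le_one hp
  unfold _root_.lpNorm
  refine Continuous.rpow_const ?_ (fun x => Or.inr (by positivity))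
  exact continuous_finset_sum _ fun i _ =>
    (continuous_abs.comp (continuous_apply i)).rpow_const fun x => Or.inr hp0

lemma minkowski_pair (r : ℕ) {p : ℝ} (hp : 1 ≤ p) {x1 x2 z1 z2 : ℝ}
    (hx1 : 0 ≤ x1) (hx2 : 0 ≤ x2) (hz1 : 0 ≤ z1) (hz2 : 0 ≤ z2) :
    ((r:ℝ) * (x1 + x2) ^ p + (z1 + z2) ^ p) ^ (1/p) ≤
      ((r:ℝ) * x1 ^ p + z1 ^ p) ^ (1/p) + ((r:ℝ) * x2 ^ p + z2 ^ p) ^ (1/p) := by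
  have hsum : ∀ (a b : ℝ), 0 ≤ a → 0 ≤ b →
      ∑ i ∈ Finset.range (r+1), |(if i < r then a else b)| ^ p = (r:ℝ) * a ^ p + b ^ p := by
    intro a b ha hb
    rw [Finset.sum_range_succ, if_neg (lt_irrefl r),
      Finset.sum_congr rfl (fun i hi => by rw [if_pos (Finset.mem_range.mp hi)]),
      Finset.sum_const, Finset.card_range, nsmul_eq_mul, abs_of_nonneg ha, abs_of_nonneg hb]
  have key := Real.Lp_add_le (Finset.range (r+1))
      (fun i => if i < r then x1 else z1) (fun i => if i < r then x2 else z2) hp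
  have hsum2 : ∑ i ∈ Finset.range (r+1),
      |(if i < r then x1 else z1) + (if i < r then x2 else z2)| ^ p
      = (r:ℝ) * (x1+x2)^p + (z1+z2)^p := by
    rw [Finset.sum_range_succ, if_neg (lt_irrefl r), if_neg (lt_irrefl r),
      Finset.sum_congr rfl (fun i hi => by
        rw [if_pos (Finset.mem_range.mp hi), if_pos (Finset.mem_range.mp hi)]),
      Finset.sum_const, Finset.card_range, nsmul_eq_mul,
      abs_of_nonneg (by positivity), abs_of_nonneg (by positivity)]
  rw [hsum2, hsum _ _ hx1 hz1, hsum _ _ hx2 hz2] at key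
  exact key

lemma min_add_min {A C A1 C1 A2 C2 : ℝ} (hA : A ≤ A1 + A2) (h1 : C ≤ C1) (h2 : C ≤ C2)
    (hA1 : 0 ≤ A1) (hA2 : 0 ≤ A2) (hC1 : 0 ≤ C1) (hC2 : 0 ≤ C2) :
    min A C ≤ min A1 C1 + min A2 C2 := by
  rcases le_total A1 C1 with h | h <;> rcases le_total A2 C2 with h' | h'
  · rw [min_eq_left h, min_eq_left h']; exact (min_le_left _ _).trans hA
  · rw [min_eq_left h, min_eq_right h']
    have := min_le_right A C; linarith
  · rw [min_eq_right h, min_eq_left h']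
    have := min_le_right A C; linarith
  · rw [min_eq_right h, min_eq_right h']
    have := min_le_right A C; linarith

lemma min_pow_eq (r : ℕ) {p A y : ℝ} (hp : 1 ≤ p) (hA : 0 ≤ A) (hy : 0 ≤ y) :
    min (A ^ p) ((r:ℝ) * y ^ p) = (min A ((r:ℝ) ^ (1/p) * y)) ^ p := by
  have hp0 : p ≠ 0 := (zero_lt_one.trans_le hp).ne'
  have hple : (0:ℝ) ≤ p := le_trans zero_le_one hp
  have hcap : (r:ℝ) * y ^ p = ((r:ℝ) ^ (1/p) * y) ^ p := by
    rw [Real.mul_rpow (Real.rpow_nonneg (Nat.cast_nonneg r) _) hy,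
      ← Real.rpow_mul (Nat.cast_nonneg r), one_div, inv_mul_cancel₀ hp0, Real.rpow_one]
  rw [hcap]
  rcases le_total A ((r:ℝ) ^ (1/p) * y) with h | h
  · rw [min_eq_left (Real.rpow_le_rpow hA h hple), min_eq_left h]
  · rw [min_eq_right (Real.rpow_le_rpow (by positivity) h hple), min_eq_right h]

set_option maxHeartbeats 1000000 in
/-- Triangle-type inequality for the pairwise trajectory distance under the
endpoint ordering of this case. -/
theorem dC_tri_case5 (r : ℕ) (hr : 1 ≤ r) (p : ℝ) (hp : 1 ≤ p)
    (cS : ℝ) (hcS : 0 < cS)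
    (F G H : Traj r) (hFG : Overlap F G) (hFH : Overlap F H) (hHG : Overlap H G)
    (ha1 : H.a ≤ F.a) (ha2 : F.a ≤ G.a) (hb1 : F.b ≤ G.b) (hb2 : G.b ≤ H.b) :
    dC r p cS F G ≤ dC r p cS F H + dC r p cS H G := by
  have hp0 : (0:ℝ) < p := zero_lt_one.trans_le hp
  have hGaFb : G.a ≤ F.b := by
    have := hFG; rw [Overlap, max_eq_right ha2, min_eq_left hb1] at this; exact this
  have hFbHb : F.b ≤ H.b := hb1.trans hb2
  have hHaGa : H.a ≤ G.a := ha1.trans ha2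
  -- continuity of the integrands
  have hlp := lpNorm_continuous r hp
  have hIccFG : Icc G.a F.b ⊆ Icc F.a F.b := Icc_subset_Icc ha2 le_rfl
  have hIccFH : Icc F.a F.b ⊆ Icc F.a H.b := Icc_subset_Icc le_rfl hFbHb
  have hIccHG : Icc G.a G.b ⊆ Icc H.a G.b := Icc_subset_Icc hHaGa le_rfl
  have hIccH : Icc F.a H.b ⊆ Icc H.a H.b := Icc_subset_Icc ha1 le_rfl
  have hcFH : ContinuousOn (fun t => lpNorm r p (fun i => F.f t i - H.f t i)) (Icc F.a F.b) :=
    hlp.comp_continuousOn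
      ((F.cont.sub ((H.cont.mono hIccH).mono hIccFH)))
  have hcHG : ContinuousOn (fun t => lpNorm r p (fun i => H.f t i - G.f t i)) (Icc G.a G.b) :=
    hlp.comp_continuousOn
      (((H.cont.mono (Icc_subset_Icc hHaGa hb2)).sub G.cont))
  have hcFHs : ContinuousOn (fun t => lpNorm r p (fun i => F.f t i - H.f t i)) (Icc G.a F.b) :=
    hcFH.mono hIccFG
  have hcHGs : ContinuousOn (fun t => lpNorm r p (fun i => H.f t i - G.f t i)) (Icc G.a F.b) :=
    hcHG.mono (Icc_subset_Icc le_rfl hb1)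
  have hiFH : IntervalIntegrable (fun t => lpNorm r p (fun i => F.f t i - H.f t i))
      volume F.a F.b := (hcFH.mono (by rw [uIcc_of_le F.hab])).intervalIntegrable
  have hiHG : IntervalIntegrable (fun t => lpNorm r p (fun i => H.f t i - G.f t i))
      volume G.a G.b := (hcHG.mono (by rw [uIcc_of_le G.hab])).intervalIntegrable
  have hiFHs : IntervalIntegrable (fun t => lpNorm r p (fun i => F.f t i - H.f t i))
      volume G.a F.b := (hcFHs.mono (by rw [uIcc_of_le hGaFb])).intervalIntegrable
  have hiHGs : IntervalIntegrable (fun t => lpNorm r p (fun i => H.f t i - G.f t i))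
      volume G.a F.b := (hcHGs.mono (by rw [uIcc_of_le hGaFb])).intervalIntegrable
  have hiFGs : IntervalIntegrable (fun t => lpNorm r p (fun i => F.f t i - G.f t i))
      volume G.a F.b := by
    refine (ContinuousOn.mono ?_ (by rw [uIcc_of_le hGaFb] : uIcc G.a F.b ⊆ Icc G.a F.b)).intervalIntegrable
    exact hlp.comp_continuousOn
      ((F.cont.mono hIccFG).sub (G.cont.mono (Icc_subset_Icc le_rfl hb1)))
  -- segment distance triangle + monotonicity
  have hA : segDist r p G.a F.b F.f G.f ≤
      segDist r p F.a F.b F.f H.f + segDist r p G.a G.b H.f G.f := by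
    have step1 : segDist r p G.a F.b F.f G.f ≤
        segDist r p G.a F.b F.f H.f + segDist r p G.a F.b H.f G.f := by
      unfold segDist
      rw [← intervalIntegral.integral_add hiFHs hiHGs]
      refine intervalIntegral.integral_mono_on hGaFb hiFGs (hiFHs.add hiHGs) ?_
      intro t ht
      exact lpNorm_triangle r hp (F.f t) (H.f t) (G.f t)
    have step2 : segDist r p G.a F.b F.f H.f ≤ segDist r p F.a F.b F.f H.f :=
      intervalIntegral.integral_mono_interval ha2 hGaFb le_rfl
        (Filter.Eventually.of_forall fun t => lpNorm_nonneg r p _) hiFH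
    have step3 : segDist r p G.a F.b H.f G.f ≤ segDist r p G.a G.b H.f G.f :=
      intervalIntegral.integral_mono_interval le_rfl hGaFb hb1
        (Filter.Eventually.of_forall fun t => lpNorm_nonneg r p _) hiHG
    linarith
  have hAFH0 : 0 ≤ segDist r p F.a F.b F.f H.f :=
    intervalIntegral.integral_nonneg F.hab fun t _ => lpNorm_nonneg r p _
  have hAHG0 : 0 ≤ segDist r p G.a G.b H.f G.f :=
    intervalIntegral.integral_nonneg G.hab fun t _ => lpNorm_nonneg r p _
  have hAFG0 : 0 ≤ segDist r p G.a F.b F.f G.f :=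
    intervalIntegral.integral_nonneg hGaFb fun t _ => lpNorm_nonneg r p _
  -- rewrite dC's
  rw [dC, dC, dC, max_eq_right ha2, min_eq_left hb1, max_eq_left ha1, min_eq_left hFbHb,
    max_eq_right hHaGa, min_eq_right hb2,
    abs_of_nonpos (by linarith : F.a - G.a ≤ 0), neg_sub,
    abs_of_nonpos (by linarith : F.b - G.b ≤ 0), neg_sub,
    abs_of_nonneg (by linarith : (0:ℝ) ≤ F.a - H.a),
    abs_of_nonpos (by linarith : F.b - H.b ≤ 0), neg_sub,
    abs_of_nonpos (by linarith : H.a - G.a ≤ 0), neg_sub,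
    abs_of_nonneg (by linarith : (0:ℝ) ≤ H.b - G.b)]
  rw [min_pow_eq r hp hAFG0 (by nlinarith [hcS.le] : (0:ℝ) ≤ 2 * cS * (F.b - G.a)),
    min_pow_eq r hp hAFH0 (by nlinarith [hcS.le, F.hab] : (0:ℝ) ≤ 2 * cS * (F.b - F.a)),
    min_pow_eq r hp hAHG0 (by nlinarith [hcS.le, G.hab] : (0:ℝ) ≤ 2 * cS * (G.b - G.a))]
  set rp : ℝ := (r:ℝ) ^ (1/p) with hrp
  have hrp0 : 0 ≤ rp := Real.rpow_nonneg (Nat.cast_nonneg r) _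
  set x1 : ℝ := cS * (F.a - H.a + (H.b - F.b)) with hx1d
  set x2 : ℝ := cS * (G.a - H.a + (H.b - G.b)) with hx2d
  set z1 : ℝ := min (segDist r p F.a F.b F.f H.f) (rp * (2 * cS * (F.b - F.a))) with hz1d
  set z2 : ℝ := min (segDist r p G.a G.b H.f G.f) (rp * (2 * cS * (G.b - G.a))) with hz2d
  have hx1 : 0 ≤ x1 := mul_nonneg hcS.le (by have := F.hab; linarith)
  have hx2 : 0 ≤ x2 := mul_nonneg hcS.le (by linarith)
  have hc1 : (0:ℝ) ≤ rp * (2 * cS * (F.b - F.a)) :=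
    mul_nonneg hrp0 (by nlinarith [hcS.le, F.hab])
  have hc2 : (0:ℝ) ≤ rp * (2 * cS * (G.b - G.a)) :=
    mul_nonneg hrp0 (by nlinarith [hcS.le, G.hab])
  have hz1 : 0 ≤ z1 := le_min hAFH0 hc1
  have hz2 : 0 ≤ z2 := le_min hAHG0 hc2
  have hxle : cS * (G.a - F.a + (G.b - F.b)) ≤ x1 + x2 := by
    rw [hx1d, hx2d]; nlinarith [hcS.le]
  have hzle : min (segDist r p G.a F.b F.f G.f) (rp * (2 * cS * (F.b - G.a))) ≤ z1 + z2 := by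
    refine min_add_min hA ?_ ?_ hAFH0 hAHG0 hc1 hc2
    · gcongr <;> linarith
    · gcongr <;> linarith
  calc ((r:ℝ) * (cS * (G.a - F.a + (G.b - F.b))) ^ p +
        (min (segDist r p G.a F.b F.f G.f) (rp * (2 * cS * (F.b - G.a)))) ^ p) ^ (1/p)
      ≤ ((r:ℝ) * (x1 + x2) ^ p + (z1 + z2) ^ p) ^ (1/p) := by
        have hbase1 : (0:ℝ) ≤ cS * (G.a - F.a + (G.b - F.b)) :=
          mul_nonneg hcS.le (by linarith)
        have hc0 : (0:ℝ) ≤ rp * (2 * cS * (F.b - G.a)) :=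
          mul_nonneg hrp0 (by nlinarith [hcS.le])
        have hmin0 : (0:ℝ) ≤ min (segDist r p G.a F.b F.f G.f) (rp * (2 * cS * (F.b - G.a))) :=
          le_min hAFG0 hc0
        apply Real.rpow_le_rpow ?_ ?_ (by positivity)
        · exact add_nonneg (mul_nonneg (Nat.cast_nonneg r) (Real.rpow_nonneg hbase1 p))
            (Real.rpow_nonneg hmin0 p)
        refine add_le_add (mul_le_mul_of_nonneg_left ?_ (Nat.cast_nonneg r)) ?_
        · exact Real.rpow_le_rpow hbase1 hxle hp0.le
        · exact Real.rpow_le_rpow hmin0 hzle hp0.le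
    _ ≤ ((r:ℝ) * x1 ^ p + z1 ^ p) ^ (1/p) + ((r:ℝ) * x2 ^ p + z2 ^ p) ^ (1/p) :=
        minkowski_pair r hp hx1 hx2 hz1 hz2
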